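/- Fix constants α, β > 0, c₁, c₂ > 0, t > 0 and s' ∈ (0,t]. Let P : [0,s'] → ℝ³ be bounded measurable, let k : [0,s'] → ℝ³ be measurable with |k(σ)| = 1 for a.e. σ, let n ∈ ℝ³ and c ∈ ℝ. For ω ∈ L²([0,s'];ℝ³), write ω(σ) = ω^{twist}(σ) + ω^{bend}(σ), where ω^{twist}(σ) = ⟨ω(σ),k(σ)⟩ k(σ) and ω^{bend}(σ) = ω(σ) − ω^{twist}(σ). Suppose ω̄ minimizes the energy E(ω) = ½ ∫₀^{s'} (1 − e^{−α(t−σ)}) e^{β(t−σ)} ( c₁ |ω^{twist}(σ)|² + c₂ |ω^{bend}(σ)|² ) dσ among all ω ∈ L²([0,s'];ℝ³) satisfying the linear constraint ⟨ n , ∫₀^{s'} (1 − e^{−α(t−σ)}) ω(σ) × (P(s') − P(σ)) dσ ⟩ + c = 0, and assume the constraint functional is not identically zero on L². Then there exists λ ∈ ℝ such that for a.e. σ ∈ (0,s'): ω̄^{twist}(σ) = (λ/c₁) e^{−β(t−σ)} ( n × (P(s') − P(σ)) )^{twist} and ω̄^{bend}(σ) = (λ/c₂) e^{−β(t−σ)}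 ( n × (P(s') − P(σ)) )^{bend}, where for a vector v ∈ ℝ³ one sets v^{twist} = ⟨v,k(σ)⟩ k(σ) and v^{bend} = v − v^{twist}. -/

import Mathlib

open MeasureTheory Set Classical
noncomputable section

/-- Three-dimensional Euclidean space. -/
abbrev E3 : Type := EuclideanSpace ℝ (Fin 3)

/-- The cross product on `ℝ³`. -/
def cross (u v : E3) : E3 :=
  WithLp.toLp 2 ![u 1 * v 2 - u 2 * v 1, u 2 * v 0 - u 0 * v 2, u 0 * v 1 - u 1 * v 0]

/-- The Euclidean inner product on `ℝ³`. -/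
def rinner (u v : E3) : ℝ := inner ℝ u v

/-- The signed distance to the boundary of `Ω`: negative inside `Ω`, positive outside. -/
def signedDistE3 (Ω : Set E3) (x : E3) : ℝ :=
  if x ∈ Ω then -(Metric.infDist x (frontier Ω)) else Metric.infDist x (frontier Ω)

/-- The (unit) outer normal to `Ω`, i.e. the gradient of the signed distance. -/
def outerNormal (Ω : Set E3) (x : E3) : E3 := gradient (signedDistE3 Ω) x

/-- The set `Ω` has boundary of class `C^k`: near every boundary point, `Ω` is the sublevel
set of a `C^k` defining function with nonvanishing gradient. -/
def HasCkBoundary (Ω : Set E3) (k : ℕ∞) : Prop :=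
  ∀ x ∈ frontier Ω, ∃ (U : Set E3) (f : E3 → ℝ), IsOpen U ∧ x ∈ U ∧
    ContDiffOn ℝ k f U ∧ (∀ y ∈ U, gradient f y ≠ 0) ∧
    Ω ∩ U = {y ∈ U | f y < 0} ∧ frontier Ω ∩ U = {y ∈ U | f y = 0}

/-- `γ`, together with its derivative `γd` and second derivative `γdd`, is a curve of Sobolev
class `H²` on `[0,T]`: `γ` and `γd` are absolutely continuous with the stated derivatives,
and `γdd` is square integrable. -/
def IsH2Curve (T : ℝ) (γ γd γdd : ℝ → E3) : Prop :=
  (∀ s ∈ Icc (0:ℝ) T, γ s = γ 0 + ∫ σ in (0:ℝ)..s, γd σ) ∧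
  (∀ s ∈ Icc (0:ℝ) T, γd s = γd 0 + ∫ σ in (0:ℝ)..s, γdd σ) ∧
  MemLp γdd 2 (volume.restrict (Icc (0:ℝ) T))

/-- The `L²` norm of `ω` on `[0,T]`. -/
def L2norm (T : ℝ) (ω : ℝ → E3) : ℝ := Real.sqrt (∫ s in (0:ℝ)..T, ‖ω s‖ ^ 2)

/-- The `H²` norm of a curve on `[0,T]` (given together with its two derivatives). -/
def H2norm (T : ℝ) (v vd vdd : ℝ → E3) : ℝ :=
  Real.sqrt ((∫ s in (0:ℝ)..T, ‖v s‖ ^ 2) + (∫ s in (0:ℝ)..T, ‖vd s‖ ^ 2) +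
    (∫ s in (0:ℝ)..T, ‖vdd s‖ ^ 2))

/-- Membership in the tube `V_ρ` around the (extended) initial curve `γ₀`:
`γ(0) = 0`, `γ'(0) = γ₀'(0)`, `|γ'| ≡ 1` on `[0,T]`, and `∫₀^T |γ'' − γ₀''|² ≤ ρ`. -/
def InTube (T ρ : ℝ) (γ₀d0 : E3) (γ₀dd : ℝ → E3) (γ γd γdd : ℝ → E3) : Prop :=
  IsH2Curve T γ γd γdd ∧ γ 0 = 0 ∧ γd 0 = γ₀d0 ∧
  (∀ s ∈ Icc (0:ℝ) T, ‖γd s‖ = 1) ∧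
  (∫ s in (0:ℝ)..T, ‖γdd s - γ₀dd s‖ ^ 2) ≤ ρ

/-- The second derivative of the curve `γ₀` extended linearly beyond `t₀`. -/
def extendSecond (t₀ : ℝ) (γ₀dd : ℝ → E3) : ℝ → E3 :=
  fun s => if s ≤ t₀ then γ₀dd s else 0

/-- The rotated curve `γ_ω(s) = γ(s) + ∫₀^s ω(σ) × (γ(s) − γ(σ)) dσ`. -/
def rotCurve (γ ω : ℝ → E3) (s : ℝ) : E3 :=
  γ s + ∫ σ in (0:ℝ)..s, cross (ω σ) (γ s - γ σ)

/-- The elastic cost `J(ω) = ∫₀^T e^{β(t−s)} |ω(s)|² ds`. -/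
def Jcost (β t T : ℝ) (ω : ℝ → E3) : ℝ :=
  ∫ s in (0:ℝ)..T, Real.exp (β * (t - s)) * ‖ω s‖ ^ 2

/-- The maximal depth `E(t,γ,Ω)` at which `γ|_{[0,t]}` penetrates inside `Ω` (zero if it
does not enter `Ω`). -/
def penDepth (t : ℝ) (γ : ℝ → E3) (Ω : Set E3) : ℝ :=
  sSup (insert 0 {d | ∃ s ∈ Icc (0:ℝ) t, γ s ∈ Ω ∧ d = Metric.infDist (γ s) (frontier Ω)})

/-- The breakdown configuration (B): the tip touches the obstacle perpendicularly, and the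
curve is straight (a.e.) wherever it does not touch the boundary. -/
def Breakdown (Ω : Set E3) (t₀ : ℝ) (γ γd γdd : ℝ → E3) : Prop :=
  γ t₀ ∈ frontier Ω ∧ γd t₀ = - outerNormal Ω (γ t₀) ∧
  (∀ᵐ s : ℝ, s ∈ Ioo (0:ℝ) t₀ → γ s ∉ frontier Ω → γdd s = 0)

/-- The linear map `v ↦ w × v`. -/
def crossLM (w : E3) : E3 →ₗ[ℝ] E3 where
  toFun v := cross w v
  map_add' a b := by
    ext i
    fin_cases i <;> simp [cross, PiLp.add_apply] <;> ring
  map_smul' c a := by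
    ext i
    fin_cases i <;> simp [cross, PiLp.smul_apply, smul_eq_mul] <;> ring

/-- The continuous linear map `A(w) : v ↦ w × v`. -/
def crossCLM (w : E3) : E3 →L[ℝ] E3 := LinearMap.toContinuousLinearMap (crossLM w)

/-- The rotation `R[w] = exp(A(w))`, where `A(w)v = w × v`. -/
def rotOf (w : E3) : E3 →L[ℝ] E3 := NormedSpace.exp (crossCLM w)

/-!
Perturbing `ω̄` in a direction `η` on which the (affine) constraint functional is constant keeps
it admissible, and along such lines the energy is a quadratic polynomial `E(ω̄ + εη) =
E(ω̄) + ε ∫ w ⟨G ω̄, η⟩ + ε² E(η)` with `G x = c₂ x + (c₁ - c₂) ⟨x, k⟩ k`. Minimality forces the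
linear coefficient to vanish on the kernel of the constraint functional, so the first variation is
a multiple `λ` of it. Both are `L²` pairings, so testing their difference against itself gives
`w G ω̄ = λ e (n × (P s' - P σ))` a.e., with `w = e · e^{β(t-σ)}` and `e = 1 - e^{-α(t-σ)} > 0`
on `σ < t`. The components of `G ω̄` along `k` and orthogonal to `k` are `c₁ ω̄^twist` and
`c₂ ω̄^bend`, which separates the two conditions.
-/

open scoped InnerProductSpace ENNReal Matrix

lemma cross_eq_crossProduct (u v : E3) :
    cross u v = WithLp.toLp 2 (WithLp.ofLp u ⨯₃ WithLp.ofLp v) := by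
  simp [cross, cross_apply]

lemma inner_eq_dotProduct (u v : E3) : ⟪u, v⟫_ℝ = WithLp.ofLp u ⬝ᵥ WithLp.ofLp v := by
  simp [EuclideanSpace.inner_eq_star_dotProduct, dotProduct_comm]

lemma cross_swap (u v : E3) : cross u v = -cross v u := by
  rw [cross_eq_crossProduct, cross_eq_crossProduct, ← cross_anticomm, WithLp.toLp_neg]

lemma inner_cross_cyclic (n u v : E3) : ⟪n, cross u v⟫_ℝ = ⟪u, cross v n⟫_ℝ := by
  simp only [inner_eq_dotProduct, cross_eq_crossProduct, triple_product_permutation n u v]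

lemma norm_cross_sq (u v : E3) : ‖cross u v‖ ^ 2 = ‖u‖ ^ 2 * ‖v‖ ^ 2 - ⟪u, v⟫_ℝ ^ 2 := by
  simp only [← real_inner_self_eq_norm_sq, inner_eq_dotProduct, cross_eq_crossProduct,
    cross_dot_cross]
  rw [dotProduct_comm (WithLp.ofLp v) (WithLp.ofLp u)]; ring

lemma norm_cross_le (u v : E3) : ‖cross u v‖ ≤ ‖u‖ * ‖v‖ := by
  refine le_of_sq_le_sq ?_ (by positivity)
  rw [mul_pow, norm_cross_sq]
  nlinarith [sq_nonneg ⟪u, v⟫_ℝ]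

lemma continuous_cross : Continuous fun x : E3 × E3 => cross x.1 x.2 := by
  unfold cross; fun_prop

section TwistBend

variable {F : Type*} [NormedAddCommGroup F] [InnerProductSpace ℝ F]

def twistBendDensity (c₁ c₂ : ℝ) (k x : F) : ℝ :=
  c₁ * ‖⟪x, k⟫_ℝ • k‖ ^ 2 + c₂ * ‖x - ⟪x, k⟫_ℝ • k‖ ^ 2

def twistBendGrad (c₁ c₂ : ℝ) (k x : F) : F :=
  c₂ • x + ((c₁ - c₂) * ⟪x, k⟫_ℝ) • k

variable {c₁ c₂ : ℝ} {k : F}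

lemma twistBendDensity_eq_inner (hk : ‖k‖ = 1) (x : F) :
    twistBendDensity c₁ c₂ k x = ⟪twistBendGrad c₁ c₂ k x, x⟫_ℝ := by
  have hkk : ⟪k, k⟫_ℝ = 1 := by rw [real_inner_self_eq_norm_sq, hk, one_pow]
  simp only [twistBendDensity, twistBendGrad, ← real_inner_self_eq_norm_sq, inner_sub_left,
    inner_sub_right, inner_add_left, real_inner_smul_left, real_inner_smul_right, hkk,
    real_inner_comm x k]
  ring

lemma twistBendDensity_add_smul (hk : ‖k‖ = 1) (x y : F) (ε : ℝ) :
    twistBendDensity c₁ c₂ k (x + ε • y) = twistBendDensity c₁ c₂ k x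
      + ε * (2 * ⟪twistBendGrad c₁ c₂ k x, y⟫_ℝ) + ε ^ 2 * twistBendDensity c₁ c₂ k y := by
  simp only [twistBendDensity_eq_inner hk, twistBendGrad, inner_add_left, inner_add_right,
    real_inner_smul_left, real_inner_smul_right, real_inner_comm x y, real_inner_comm k y,
    real_inner_comm x k]
  ring

lemma twistBend_parts_of_grad_eq_smul (hk : ‖k‖ = 1) (hc₁ : c₁ ≠ 0) (hc₂ : c₂ ≠ 0) {x v : F}
    {a : ℝ} (h : twistBendGrad c₁ c₂ k x = a • v) :
    ⟪x, k⟫_ℝ • k = (a / c₁) • (⟪v, k⟫_ℝ • k) ∧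
      x - ⟪x, k⟫_ℝ • k = (a / c₂) • (v - ⟪v, k⟫_ℝ • k) := by
  have hkk : ⟪k, k⟫_ℝ = 1 := by rw [real_inner_self_eq_norm_sq, hk, one_pow]
  have htwist : c₁ * ⟪x, k⟫_ℝ = a * ⟪v, k⟫_ℝ := by
    have := congrArg (⟪·, k⟫_ℝ) h
    simp only [twistBendGrad, inner_add_left, real_inner_smul_left, hkk] at this
    linarith
  have hx : x = c₂⁻¹ • (a • v - ((c₁ - c₂) * ⟪x, k⟫_ℝ) • k) := by
    rw [eq_inv_smul_iff₀ hc₂, eq_sub_iff_add_eq, ← h, twistBendGrad]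
  constructor
  · rw [smul_smul, div_mul_eq_mul_div, ← htwist, mul_div_cancel_left₀ _ hc₁]
  · nth_rewrite 1 [hx]
    match_scalars
    · field_simp
    · field_simp
      linear_combination -htwist

lemma twistBend_parts_of_weighted_grad_eq (hk : ‖k‖ = 1) (hc₁ : c₁ ≠ 0) (hc₂ : c₂ ≠ 0)
    {e E lam : ℝ} (he : e ≠ 0) (hE : E ≠ 0) {x v : F}
    (h : (e * E) • twistBendGrad c₁ c₂ k x = lam • e • v) :
    ⟪x, k⟫_ℝ • k = (lam / c₁) • (E⁻¹ • (⟪v, k⟫_ℝ • k)) ∧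
      x - ⟪x, k⟫_ℝ • k = (lam / c₂) • (E⁻¹ • (v - ⟪v, k⟫_ℝ • k)) := by
  have hgrad : twistBendGrad c₁ c₂ k x = (lam * E⁻¹) • v := by
    rw [(eq_inv_smul_iff₀ (mul_ne_zero he hE)).2 h, smul_smul, smul_smul]
    field_simp
  simpa only [smul_smul, mul_div_right_comm, mul_assoc] using
    twistBend_parts_of_grad_eq_smul hk hc₁ hc₂ hgrad

end TwistBend

theorem exists_lagrange_multiplier_of_isMinOn {V : Type*} [AddCommGroup V] [Module ℝ V]
    {E Q : V → ℝ} {L g : V →ₗ[ℝ] ℝ} {x : V}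
    (hE : ∀ y (ε : ℝ), E (x + ε • y) = E x + ε * g y + ε ^ 2 * Q y)
    (hx : IsMinOn E {y | L y = L x} x) : ∃ lam : ℝ, g = lam • L := by
  have hker : ⨅ _ : Unit, LinearMap.ker L ≤ LinearMap.ker g := by
    intro y hy
    simp only [iInf_const, LinearMap.mem_ker] at hy ⊢
    have hquad : ∀ ε : ℝ, 0 ≤ Q y * (ε * ε) + g y * ε + 0 := fun ε => by
      have := hx (show L (x + ε • y) = L x by simp [hy])
      rw [mem_ofPred_eq, hE] at this
      linarith
    have := discrim_le_zero hquad
    rw [discrim] at this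
    nlinarith [sq_nonneg (g y)]
  obtain ⟨lam, hlam⟩ := Submodule.mem_span_singleton.1 <| by
    simpa only [range_const] using mem_span_of_iInf_ker_le_ker hker
  exact ⟨lam, hlam.symm⟩

lemma ContinuousOn.memLp_top_restrict {α E : Type*} [MeasurableSpace α] [TopologicalSpace α]
    [OpensMeasurableSpace α] [SecondCountableTopology α] [NormedAddCommGroup E]
    {μ : Measure α} {f : α → E} {s : Set α} (hs : IsCompact s) (hsm : MeasurableSet s)
    (hf : ContinuousOn f s) : MemLp f ∞ (μ.restrict s) := by
  obtain ⟨C, hC⟩ := hs.exists_bound_of_continuousOn hf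
  exact memLp_top_of_bound (hf.aestronglyMeasurable hsm) C
    ((ae_restrict_iff' hsm).2 (ae_of_all _ hC))

section L2Pairing

variable {α F : Type*} [MeasurableSpace α] {μ : Measure α}
  [NormedAddCommGroup F] [InnerProductSpace ℝ F]

variable (F) in
def memLpSubmodule (p : ℝ≥0∞) (μ : Measure α) : Submodule ℝ (α → F) where
  carrier := {f | MemLp f p μ}
  add_mem' hf hg := hf.add hg
  zero_mem' := MemLp.zero
  smul_mem' c _ hf := hf.const_smul c

lemma MeasureTheory.MemLp.integrable_inner {f g : α → F} (hf : MemLp f 2 μ) (hg : MemLp g 2 μ) :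
    Integrable (fun a => ⟪f a, g a⟫_ℝ) μ :=
  memLp_one_iff_integrable.1 <| (innerSL ℝ).memLp_of_bilin 1 hf hg

def l2Pairing {h : α → F} (hh : MemLp h 2 μ) : memLpSubmodule F 2 μ →ₗ[ℝ] ℝ where
  toFun f := ∫ a, ⟪h a, f.1 a⟫_ℝ ∂μ
  map_add' f g := by
    simp only [Submodule.coe_add, Pi.add_apply, inner_add_right]
    exact integral_add (hh.integrable_inner f.2) (hh.integrable_inner g.2)
  map_smul' c f := by
    simp only [Submodule.coe_smul, Pi.smul_apply, real_inner_smul_right, integral_const_mul,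
      RingHom.id_apply, smul_eq_mul]

lemma l2Pairing_apply {h : α → F} (hh : MemLp h 2 μ) (f : memLpSubmodule F 2 μ) :
    l2Pairing hh f = ∫ a, ⟪h a, f.1 a⟫_ℝ ∂μ := rfl

lemma l2Pairing_const_smul {h : α → F} (hh : MemLp h 2 μ) (c : ℝ) :
    l2Pairing (hh.const_smul c) = c • l2Pairing hh := by
  ext f
  simp only [l2Pairing_apply, LinearMap.smul_apply, Pi.smul_apply, real_inner_smul_left,
    integral_const_mul, smul_eq_mul]

lemma ae_eq_of_l2Pairing_eq {f g : α → F} (hf : MemLp f 2 μ) (hg : MemLp g 2 μ)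
    (h : l2Pairing hf = l2Pairing hg) : f =ᵐ[μ] g := by
  have hd : MemLp (f - g) 2 μ := hf.sub hg
  have hzero : ∫ a, ⟪(f - g) a, (f - g) a⟫_ℝ ∂μ = 0 := by
    have key := LinearMap.congr_fun h ⟨f - g, hd⟩
    rw [l2Pairing_apply, l2Pairing_apply, ← sub_eq_zero,
      ← integral_sub (hf.integrable_inner hd) (hg.integrable_inner hd)] at key
    simp only [← inner_sub_left] at key
    exact key
  filter_upwards [(integral_eq_zero_iff_of_nonneg (fun _ => real_inner_self_nonneg)
    (hd.integrable_inner hd)).1 hzero] with a ha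
  exact sub_eq_zero.1 (inner_self_eq_zero.1 ha)

end L2Pairing

section Energy

variable {α F : Type*} [MeasurableSpace α] {μ : Measure α}
  [NormedAddCommGroup F] [InnerProductSpace ℝ F] {w : α → ℝ} {k : α → F}

def twistBendEnergy (μ : Measure α) (w : α → ℝ) (c₁ c₂ : ℝ) (k x : α → F) : ℝ :=
  (1 / 2) * ∫ a, w a * twistBendDensity c₁ c₂ (k a) (x a) ∂μ

lemma MeasureTheory.MemLp.twistBendGrad {x : α → F} (hx : MemLp x 2 μ) (c₁ c₂ : ℝ)
    (hk : MemLp k ∞ μ) :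
    MemLp (fun a => twistBendGrad c₁ c₂ (k a) (x a)) 2 μ :=
  (hx.const_smul c₂).add (hk.smul (((innerSL ℝ).memLp_of_bilin 2 hx hk).const_mul (c₁ - c₂)))

lemma twistBendEnergy_add_smul {c₁ c₂ : ℝ} (hw : MemLp w ∞ μ) (hk : MemLp k ∞ μ)
    (hk1 : ∀ᵐ a ∂μ, ‖k a‖ = 1) {x y : α → F} (hx : MemLp x 2 μ) (hy : MemLp y 2 μ) (ε : ℝ) :
    twistBendEnergy μ w c₁ c₂ k (x + ε • y) = twistBendEnergy μ w c₁ c₂ k x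
      + ε * ∫ a, ⟪w a • twistBendGrad c₁ c₂ (k a) (x a), y a⟫_ℝ ∂μ
      + ε ^ 2 * twistBendEnergy μ w c₁ c₂ k y := by
  have hint : ∀ z : α → F, MemLp z 2 μ →
      Integrable (fun a => w a * twistBendDensity c₁ c₂ (k a) (z a)) μ := fun z hz =>
    (((hz.twistBendGrad c₁ c₂ hk).smul hw).integrable_inner hz).congr <| by
      filter_upwards [hk1] with a ha
      simp only [Pi.smul_apply', real_inner_smul_left, twistBendDensity_eq_inner ha]
  have hexpand : ∀ᵐ a ∂μ, w a * twistBendDensity c₁ c₂ (k a) ((x + ε • y) a)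
      = w a * twistBendDensity c₁ c₂ (k a) (x a)
        + ε * (2 * ⟪w a • twistBendGrad c₁ c₂ (k a) (x a), y a⟫_ℝ)
        + ε ^ 2 * (w a * twistBendDensity c₁ c₂ (k a) (y a)) := by
    filter_upwards [hk1] with a ha
    rw [Pi.add_apply, Pi.smul_apply, twistBendDensity_add_smul ha, real_inner_smul_left]
    ring
  have hcross : Integrable (fun a => ε * (2 * ⟪w a • twistBendGrad c₁ c₂ (k a) (x a), y a⟫_ℝ)) μ :=
    ((((hx.twistBendGrad c₁ c₂ hk).smul hw).integrable_inner hy).const_mul 2).const_mul ε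
  have hfirst : Integrable (fun a => w a * twistBendDensity c₁ c₂ (k a) (x a)
      + ε * (2 * ⟪w a • twistBendGrad c₁ c₂ (k a) (x a), y a⟫_ℝ)) μ := (hint x hx).add hcross
  unfold twistBendEnergy
  rw [integral_congr_ae hexpand, integral_add hfirst ((hint y hy).const_mul _),
    integral_add (hint x hx) hcross, integral_const_mul, integral_const_mul, integral_const_mul]
  ring

theorem exists_twistBend_euler_lagrange {c₁ c₂ : ℝ} {q x : α → F} (hw : MemLp w ∞ μ)
    (hk : MemLp k ∞ μ) (hk1 : ∀ᵐ a ∂μ, ‖k a‖ = 1) (hq : MemLp q 2 μ) (hx : MemLp x 2 μ)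
    (hmin : ∀ y, MemLp y 2 μ → ∫ a, ⟪q a, y a⟫_ℝ ∂μ = ∫ a, ⟪q a, x a⟫_ℝ ∂μ →
      twistBendEnergy μ w c₁ c₂ k x ≤ twistBendEnergy μ w c₁ c₂ k y) :
    ∃ lam : ℝ, ∀ᵐ a ∂μ, w a • twistBendGrad c₁ c₂ (k a) (x a) = lam • q a := by
  have hG := (hx.twistBendGrad c₁ c₂ hk).smul (r := 2) hw
  obtain ⟨lam, hlam⟩ := exists_lagrange_multiplier_of_isMinOn (V := memLpSubmodule F 2 μ)
    (E := fun y => twistBendEnergy μ w c₁ c₂ k y) (Q := fun y => twistBendEnergy μ w c₁ c₂ k y)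
    (L := l2Pairing hq) (g := l2Pairing hG) (x := ⟨x, hx⟩)
    (fun y ε => by
      simpa only [Submodule.coe_add, Submodule.coe_smul, l2Pairing_apply, Pi.smul_apply'] using
        twistBendEnergy_add_smul hw hk hk1 hx y.2 ε)
    (fun y hy => hmin y y.2 hy)
  exact ⟨lam, ae_eq_of_l2Pairing_eq hG (hq.const_smul lam) (by rw [hlam, l2Pairing_const_smul])⟩

end Energy

section Constraint

variable {α : Type*} [MeasurableSpace α] {μ : Measure α}

lemma MeasureTheory.MemLp.cross {p q r : ℝ≥0∞} [ENNReal.HolderTriple p q r] {u v : α → E3}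
    (hu : MemLp u p μ) (hv : MemLp v q μ) : MemLp (fun a => cross (u a) (v a)) r μ :=
  hu.of_bilin _root_.cross 1 hv (continuous_cross.comp_aestronglyMeasurable₂ hu.1 hv.1)
    (ae_of_all _ fun a => by simpa [← NNReal.coe_le_coe] using norm_cross_le (u a) (v a))

lemma inner_integral_smul_cross [IsFiniteMeasure μ] {e : α → ℝ} {p ω : α → E3}
    (he : MemLp e ∞ μ) (hp : MemLp p ∞ μ) (hω : MemLp ω 2 μ) (n : E3) :
    ⟪n, ∫ a, e a • cross (ω a) (p a) ∂μ⟫_ℝ = -∫ a, ⟪e a • cross n (p a), ω a⟫_ℝ ∂μ := by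
  have hint : Integrable (fun a => e a • cross (ω a) (p a)) μ :=
    ((hω.cross (r := 2) hp).smul he).integrable one_le_two
  rw [← integral_inner hint, ← integral_neg]
  congr with a
  rw [real_inner_smul_right, real_inner_smul_left, inner_cross_cyclic, cross_swap, inner_neg_right,
    real_inner_comm]
  ring

end Constraint

theorem twist_bend_necessary_conditions_general
    (α β c₁ c₂ t s' : ℝ) (hα : 0 < α) (hc₁ : 0 < c₁) (hc₂ : 0 < c₂)
    (hs' : s' ∈ Ioc (0:ℝ) t)
    (P : ℝ → E3) (hPm : Measurable P) (hPb : ∃ C : ℝ, ∀ σ ∈ Icc (0:ℝ) s', ‖P σ‖ ≤ C)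
    (k : ℝ → E3) (hkm : Measurable k) (hk : ∀ᵐ σ : ℝ, σ ∈ Icc (0:ℝ) s' → ‖k σ‖ = 1)
    (n : E3) (c : ℝ)
    (En : (ℝ → E3) → ℝ)
    (hEn : ∀ ω : ℝ → E3, En ω = (1/2) * ∫ σ in (0:ℝ)..s',
        (1 - Real.exp (-(α * (t - σ)))) * Real.exp (β * (t - σ)) *
          (c₁ * ‖rinner (ω σ) (k σ) • k σ‖ ^ 2 +
            c₂ * ‖ω σ - rinner (ω σ) (k σ) • k σ‖ ^ 2))
    (Con : (ℝ → E3) → ℝ)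
    (hCon : ∀ ω : ℝ → E3, Con ω = rinner n (∫ σ in (0:ℝ)..s',
        (1 - Real.exp (-(α * (t - σ)))) • cross (ω σ) (P s' - P σ)) + c)
    (ωbar : ℝ → E3) (hωbar : MemLp ωbar 2 (volume.restrict (Icc (0:ℝ) s')))
    (hfeas : Con ωbar = 0)
    (hmin : ∀ ω : ℝ → E3, MemLp ω 2 (volume.restrict (Icc (0:ℝ) s')) →
        Con ω = 0 → En ωbar ≤ En ω) :
    ∃ lam : ℝ, ∀ᵐ σ : ℝ, σ ∈ Ioo (0:ℝ) s' →
      rinner (ωbar σ) (k σ) • k σ =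
        (lam / c₁) • (Real.exp (-(β * (t - σ))) •
          (rinner (cross n (P s' - P σ)) (k σ) • k σ)) ∧
      ωbar σ - rinner (ωbar σ) (k σ) • k σ =
        (lam / c₂) • (Real.exp (-(β * (t - σ))) •
          (cross n (P s' - P σ) - rinner (cross n (P s' - P σ)) (k σ) • k σ)) := by
  obtain ⟨hs0, hst⟩ := hs'
  obtain ⟨C, hC⟩ := hPb
  set μ := volume.restrict (Icc (0:ℝ) s')
  set e : ℝ → ℝ := fun σ => 1 - Real.exp (-(α * (t - σ)))
  set w : ℝ → ℝ := fun σ => e σ * Real.exp (β * (t - σ))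
  have he : MemLp e ∞ μ :=
    (by fun_prop : Continuous e).continuousOn.memLp_top_restrict isCompact_Icc measurableSet_Icc
  have hw : MemLp w ∞ μ :=
    (by fun_prop : Continuous w).continuousOn.memLp_top_restrict isCompact_Icc measurableSet_Icc
  have hp : MemLp (fun σ => P s' - P σ) ∞ μ :=
    memLp_top_of_bound (by fun_prop) (C + C) <| (ae_restrict_iff' measurableSet_Icc).2 <|
      ae_of_all _ fun σ hσ =>
        (norm_sub_le _ _).trans (add_le_add (hC s' ⟨hs0.le, le_rfl⟩) (hC σ hσ))
  have hk1 : ∀ᵐ σ ∂μ, ‖k σ‖ = 1 := (ae_restrict_iff' measurableSet_Icc).2 hk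
  have hkL : MemLp k ∞ μ := memLp_top_of_bound hkm.aestronglyMeasurable 1 (hk1.mono fun _ h => h.le)
  have hq : MemLp (fun σ => e σ • cross n (P s' - P σ)) 2 μ :=
    (((memLp_top_const n).cross (r := ∞) hp).smul he).mono_exponent le_top
  have hEn' : ∀ ω, En ω = twistBendEnergy μ w c₁ c₂ k ω := fun ω => by
    rw [hEn, intervalIntegral.integral_of_le hs0.le, ← integral_Icc_eq_integral_Ioc]; rfl
  have hCon' : ∀ ω, MemLp ω 2 μ → Con ω = -∫ σ, ⟪e σ • cross n (P s' - P σ), ω σ⟫_ℝ ∂μ + c :=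
    fun ω hω => by
      rw [hCon, intervalIntegral.integral_of_le hs0.le, ← integral_Icc_eq_integral_Ioc]
      exact congrArg (· + c) (inner_integral_smul_cross he hp hω n)
  obtain ⟨lam, hlam⟩ := exists_twistBend_euler_lagrange hw hkL hk1 hq hωbar fun y hy hL => by
    simpa only [hEn'] using hmin y hy (by rw [hCon' y hy, hL, ← hCon' ωbar hωbar, hfeas])
  refine ⟨lam, ?_⟩
  filter_upwards [(ae_restrict_iff' measurableSet_Icc).1 hlam, hk] with σ hσ hkσ ⟨hσ0, hσs⟩
  have hIcc : σ ∈ Icc 0 s' := ⟨hσ0.le, hσs.le⟩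
  have he0 : e σ ≠ 0 := (sub_pos.2 (Real.exp_lt_one_iff.2 (by nlinarith))).ne'
  simpa only [rinner, Real.exp_neg] using twistBend_parts_of_weighted_grad_eq (hkσ hIcc)
    hc₁.ne' hc₂.ne' he0 (Real.exp_pos _).ne' (hσ hIcc)

/-- Lagrange-multiplier necessary conditions for the minimizer of the elastic
energy penalizing twisting and bending with different weights `c₁, c₂`. -/
theorem twist_bend_necessary_conditions
    (α β c₁ c₂ t s' : ℝ) (hα : 0 < α) (hβ : 0 < β) (hc₁ : 0 < c₁) (hc₂ : 0 < c₂)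
    (ht : 0 < t) (hs' : s' ∈ Ioc (0:ℝ) t)
    (P : ℝ → E3) (hPm : Measurable P) (hPb : ∃ C : ℝ, ∀ σ ∈ Icc (0:ℝ) s', ‖P σ‖ ≤ C)
    (k : ℝ → E3) (hkm : Measurable k) (hk : ∀ᵐ σ : ℝ, σ ∈ Icc (0:ℝ) s' → ‖k σ‖ = 1)
    (n : E3) (c : ℝ)
    (En : (ℝ → E3) → ℝ)
    (hEn : ∀ ω : ℝ → E3, En ω = (1/2) * ∫ σ in (0:ℝ)..s',
        (1 - Real.exp (-(α * (t - σ)))) * Real.exp (β * (t - σ)) *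
          (c₁ * ‖rinner (ω σ) (k σ) • k σ‖ ^ 2 +
            c₂ * ‖ω σ - rinner (ω σ) (k σ) • k σ‖ ^ 2))
    (Con : (ℝ → E3) → ℝ)
    (hCon : ∀ ω : ℝ → E3, Con ω = rinner n (∫ σ in (0:ℝ)..s',
        (1 - Real.exp (-(α * (t - σ)))) • cross (ω σ) (P s' - P σ)) + c)
    (hnontriv : ∃ ω₀ : ℝ → E3,
        MemLp ω₀ 2 (volume.restrict (Icc (0:ℝ) s')) ∧ Con ω₀ ≠ c)
    (ωbar : ℝ → E3) (hωbar : MemLp ωbar 2 (volume.restrict (Icc (0:ℝ) s')))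
    (hfeas : Con ωbar = 0)
    (hmin : ∀ ω : ℝ → E3, MemLp ω 2 (volume.restrict (Icc (0:ℝ) s')) →
        Con ω = 0 → En ωbar ≤ En ω) :
    ∃ lam : ℝ, ∀ᵐ σ : ℝ, σ ∈ Ioo (0:ℝ) s' →
      rinner (ωbar σ) (k σ) • k σ =
        (lam / c₁) • (Real.exp (-(β * (t - σ))) •
          (rinner (cross n (P s' - P σ)) (k σ) • k σ)) ∧
      ωbar σ - rinner (ωbar σ) (k σ) • k σ =
        (lam / c₂) • (Real.exp (-(β * (t - σ))) •
          (cross n (P s' - P σ) - rinner (cross n (P s' - P σ)) (k σ) • k σ)) :=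
  twist_bend_necessary_conditions_general α β c₁ c₂ t s' hα hc₁ hc₂ hs' P hPm hPb k hkm hk n c En
    hEn Con hCon ωbar hωbar hfeas hmin
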